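/- The integral ∫₁^u (ln(1 + 1/v))/(v ln 2) dv converges to π²/(12 ln 2) as u → ∞. -/

import Mathlib

/-!
For `v > 1` the integrand expands as
`log (1 + 1/v) / v = ∑ₙ (-1)ⁿ / (n + 1) · v^(-n-2)`. The `n`-th term has integral
`(-1)ⁿ / (n + 1)²` over `(1, ∞)` and these integrals are absolutely summable (by `ζ(2)`), so the
improper integral equals `η(2) = ∑ₙ (-1)ⁿ / (n + 1)² = ζ(2) / 2 = π² / 12`. The integrand is
bounded by `v⁻²`, hence the integrals over `[1, u]` converge to the improper one.
-/

open Filter MeasureTheory Real Set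

lemma hasSum_one_div_succ_sq : HasSum (fun n : ℕ => 1 / ((n : ℝ) + 1) ^ 2) (π ^ 2 / 6) := by
  have h := (hasSum_nat_add_iff (f := fun n : ℕ => 1 / (n : ℝ) ^ 2) 1).2
    (by simpa using hasSum_zeta_two)
  exact_mod_cast h

lemma hasSum_neg_one_pow_div_succ_sq :
    HasSum (fun n : ℕ => (-1) ^ n / ((n : ℝ) + 1) ^ 2) (π ^ 2 / 12) := by
  set f : ℕ → ℝ := fun n => 1 / ((n : ℝ) + 1) ^ 2 - (-1) ^ n / ((n : ℝ) + 1) ^ 2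
  have heven : HasSum (fun k => f (2 * k)) 0 := by simp [f, pow_mul]
  have hodd : HasSum (fun k => f (2 * k + 1)) (1 / 2 * (π ^ 2 / 6)) := by
    refine (hasSum_one_div_succ_sq.mul_left _).congr_fun fun k => ?_
    simp only [f, pow_succ, pow_mul]
    push_cast
    field_simp
    ring
  have h := hasSum_one_div_succ_sq.sub (heven.even_add_odd hodd)
  rw [show π ^ 2 / 12 = π ^ 2 / 6 - (0 + 1 / 2 * (π ^ 2 / 6)) by ring]
  simpa only [f, sub_sub_cancel] using h

noncomputable def logOneAddInvDivTerm (n : ℕ) (x : ℝ) : ℝ :=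
  (-1) ^ n / ((n : ℝ) + 1) * x ^ (-(n : ℝ) - 2)

lemma hasSum_logOneAddInvDivTerm {x : ℝ} (hx : 1 < x) :
    HasSum (fun n => logOneAddInvDivTerm n x) (log (1 + 1 / x) / x) := by
  have hx0 : 0 < x := zero_lt_one.trans hx
  have habs : |-1 / x| < 1 := by
    rw [abs_div, abs_neg, abs_one, abs_of_pos hx0, div_lt_one hx0]
    exact hx
  have h := (hasSum_pow_div_log_of_abs_lt_one habs).neg.div_const x
  rw [neg_neg, show 1 - -1 / x = 1 + 1 / x by ring] at h
  refine h.congr_fun fun n => ?_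
  rw [logOneAddInvDivTerm, show -(n : ℝ) - 2 = -((n + 2 : ℕ) : ℝ) by push_cast; ring,
    rpow_neg hx0.le, rpow_natCast, div_pow]
  field_simp
  ring

lemma integrableOn_logOneAddInvDivTerm (n : ℕ) :
    IntegrableOn (logOneAddInvDivTerm n) (Ioi 1) :=
  (integrableOn_Ioi_rpow_of_lt (by linarith [n.cast_nonneg (α := ℝ)]) one_pos).const_mul _

lemma integral_Ioi_one_rpow_neg_nat_sub_two (n : ℕ) :
    ∫ x in Ioi (1 : ℝ), x ^ (-(n : ℝ) - 2) = 1 / ((n : ℝ) + 1) := by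
  rw [integral_Ioi_rpow_of_lt (by linarith [n.cast_nonneg (α := ℝ)]) one_pos, one_rpow,
    show -(n : ℝ) - 2 + 1 = -((n : ℝ) + 1) by ring, div_neg, neg_div, neg_neg]

lemma integral_logOneAddInvDivTerm (n : ℕ) :
    ∫ x in Ioi (1 : ℝ), logOneAddInvDivTerm n x = (-1) ^ n / ((n : ℝ) + 1) ^ 2 := by
  simp only [logOneAddInvDivTerm]
  rw [integral_const_mul, integral_Ioi_one_rpow_neg_nat_sub_two]
  field_simp

lemma integral_norm_logOneAddInvDivTerm (n : ℕ) :
    ∫ x in Ioi (1 : ℝ), ‖logOneAddInvDivTerm n x‖ = 1 / ((n : ℝ) + 1) ^ 2 := by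
  have h : EqOn (fun x => ‖logOneAddInvDivTerm n x‖)
      (fun x => 1 / ((n : ℝ) + 1) * x ^ (-(n : ℝ) - 2)) (Ioi 1) := fun x hx => by
    simp [logOneAddInvDivTerm, abs_of_pos (rpow_pos_of_pos (zero_lt_one.trans hx) _),
      (Nat.cast_add_one_pos (α := ℝ) n).le]
  rw [setIntegral_congr_fun measurableSet_Ioi h, integral_const_mul,
    integral_Ioi_one_rpow_neg_nat_sub_two]
  field_simp

lemma integral_Ioi_one_log_one_add_inv_div :
    ∫ x in Ioi (1 : ℝ), log (1 + 1 / x) / x = π ^ 2 / 12 := by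
  have hsum := hasSum_integral_of_summable_integral_norm (F := logOneAddInvDivTerm)
    integrableOn_logOneAddInvDivTerm
    (by simpa only [integral_norm_logOneAddInvDivTerm] using hasSum_one_div_succ_sq.summable)
  simp only [integral_logOneAddInvDivTerm] at hsum
  rw [hasSum_neg_one_pow_div_succ_sq.unique hsum]
  exact setIntegral_congr_fun measurableSet_Ioi fun x hx =>
    (hasSum_logOneAddInvDivTerm hx).tsum_eq.symm

lemma integrableOn_Ioi_one_log_one_add_inv_div :
    IntegrableOn (fun x : ℝ => log (1 + 1 / x) / x) (Ioi 1) := by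
  refine (integrableOn_Ioi_rpow_of_lt (by norm_num : (-2 : ℝ) < -1) one_pos).mono'
    (by fun_prop : Measurable fun x : ℝ => log (1 + 1 / x) / x).aestronglyMeasurable ?_
  filter_upwards [ae_restrict_mem measurableSet_Ioi] with x hx
  have hx0 : 0 < x := zero_lt_one.trans hx
  have hlog : log (1 + 1 / x) ≤ 1 / x := by
    linarith [log_le_sub_one_of_pos (by positivity : 0 < 1 + 1 / x)]
  rw [norm_of_nonneg (div_nonneg (log_nonneg (by simp [hx0.le])) hx0.le),
    rpow_neg hx0.le, rpow_two]
  calc log (1 + 1 / x) / x ≤ 1 / x / x := by gcongr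
    _ = (x ^ 2)⁻¹ := by field_simp

theorem stmt6 :
    Tendsto (fun u : ℝ => ∫ v in (1:ℝ)..u, Real.log (1 + 1 / v) / (v * Real.log 2)) atTop
      (nhds (Real.pi ^ 2 / (12 * Real.log 2))) := by
  simp_rw [← div_div, intervalIntegral.integral_div]
  rw [← integral_Ioi_one_log_one_add_inv_div]
  exact (intervalIntegral_tendsto_integral_Ioi 1 integrableOn_Ioi_one_log_one_add_inv_div
    tendsto_id).div_const _
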